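/- (Weighted trilinear estimate.) Let s ∈ (1/2,1] and σ ∈ (1/s,2). There exists a constant C > 0 depending only on s and σ such that for every c ≥ 0 and every f : ℤ² → ℂ with f(0) = 0 and X_{σ+1} < ∞, one has |∑_{j,k ∈ ℤ², j ≠ 0, k ≠ 0, j+k ≠ 0} e^{c(|j+k|^s − |j|^s − |k|^s)} ((j^⊥·k)/|j|) f(j) f(k) |j+k|^{2σs} \overline{f(j+k)}| ≤ C · X_σ · X_{σ+1}², where for ρ > 0 we set X_ρ := (∑_{k ∈ ℤ², k ≠ 0} |k|^{2ρs} |f(k)|²)^{1/2}. (Here | · | is the Euclidean norm on ℤ² ⊂ ℝ² and j^⊥ = (−j₂, j₁).) This is the Fourier-side form of |⟨e^{φA^{1/2}}B(w,w), e^{φA^{1/2}}A^σ w⟩_{L²}| ≲ ‖e^{φA^{1/2}}w‖_{Ḣ^{σs}} ‖e^{φA^{1/2}}w‖²_{Ḣ^{(σ+1)s}} with A = |∇|^{2s}, f(k) = e^{φ|k|^s} ŵ(k) and c = φ − νW_t ≥ 0. -/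

import Mathlib

/-!
Since `c ≥ 0` and `r ↦ r ^ s` is subadditive for `s ≤ 1`, the exponential weight is at most `1`,
and `|j^⊥ · k| / |j| ≤ |k|`. Writing `2σs = (σ+1)s + (σ-1)s` and splitting
`|j+k|^{(σ-1)s} ≤ |j|^{(σ-1)s} + |k|^{(σ-1)s}` bounds each summand by two terms of the form
`a(j) b(k) h(j+k)` with `b, h` weighted `ℓ²` sequences controlled by `X_σ, X_{σ+1}` and `a` in `ℓ¹`.
Young's inequality `ℓ¹ × ℓ² × ℓ²` and Cauchy–Schwarz against `∑_{k≠0} |k|^{-r}`, finite for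
`r > 2` (here `r = 4s` and `r = 2σs`), finish the estimate. All sums are taken in `[0, ∞]`, so
no summability has to be checked.
-/

open scoped ENNReal NNReal
open MeasureTheory

noncomputable section

/-- Euclidean norm of a lattice point `k ∈ ℤ² ⊆ ℝ²`. -/
def znorm (k : ℤ × ℤ) : ℝ := Real.sqrt ((k.1 : ℝ) ^ 2 + (k.2 : ℝ) ^ 2)

/-- `j^⊥ · k` where `j^⊥ = (−j₂, j₁)`. -/
def perpDot (j k : ℤ × ℤ) : ℝ := (-(j.2 : ℝ)) * (k.1 : ℝ) + (j.1 : ℝ) * (k.2 : ℝ)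

/-- Gevrey norm `‖a‖_{ρ,φ} = (∑_{k≠0} |k|^{2ρ} e^{2φ|k|^s} |a k|²)^{1/2}`, valued in `ℝ≥0∞`. -/
def gnorm (s ρ φ : ℝ) (a : ℤ × ℤ → ℂ) : ℝ≥0∞ :=
  (∑' k : ℤ × ℤ, if k = 0 then 0 else
    ENNReal.ofReal (znorm k ^ (2 * ρ) * Real.exp (2 * φ * znorm k ^ s) * ‖a k‖ ^ 2)) ^ (1/2 : ℝ)

theorem ENNReal.tsum_mul_le_tsum_rpow_mul_tsum_rpow {ι : Type*} [Countable ι] {p q : ℝ}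
    (hpq : p.HolderConjugate q) (f g : ι → ℝ≥0∞) :
    ∑' i, f i * g i ≤ (∑' i, f i ^ p) ^ (1 / p) * (∑' i, g i ^ q) ^ (1 / q) := by
  let _ : MeasurableSpace ι := ⊤
  simpa [lintegral_count] using ENNReal.lintegral_mul_le_Lp_mul_Lq Measure.count hpq
    (Measurable.of_discrete (f := f)).aemeasurable (Measurable.of_discrete (f := g)).aemeasurable

def l2Norm {ι : Type*} (a : ι → ℝ≥0∞) : ℝ≥0∞ := (∑' i, a i ^ (2 : ℝ)) ^ (1 / 2 : ℝ)

theorem tsum_mul_le_l2Norm_mul_l2Norm {ι : Type*} [Countable ι] (a b : ι → ℝ≥0∞) :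
    ∑' i, a i * b i ≤ l2Norm a * l2Norm b :=
  ENNReal.tsum_mul_le_tsum_rpow_mul_tsum_rpow .two_two a b

theorem l2Norm_comp_add_left {G : Type*} [AddGroup G] (h : G → ℝ≥0∞) (j : G) :
    l2Norm (fun k => h (j + k)) = l2Norm h := by
  simp only [l2Norm]
  congr 1
  exact (Equiv.addLeft j).tsum_eq (fun k => h k ^ (2 : ℝ))

theorem tsum_mul_mul_add_le {G : Type*} [AddGroup G] [Countable G] (a b h : G → ℝ≥0∞) :
    ∑' p : G × G, a p.1 * b p.2 * h (p.1 + p.2) ≤ (∑' j, a j) * (l2Norm b * l2Norm h) := by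
  rw [ENNReal.tsum_prod', ← ENNReal.tsum_mul_right]
  refine ENNReal.tsum_le_tsum fun j => ?_
  simp_rw [mul_assoc, ENNReal.tsum_mul_left]
  gcongr
  simpa [l2Norm_comp_add_left] using tsum_mul_le_l2Norm_mul_l2Norm b (fun k => h (j + k))

lemma znorm_eq_norm (k : ℤ × ℤ) : znorm k = ‖(⟨k.1, k.2⟩ : ℂ)‖ := by
  rw [znorm, Complex.norm_def, Complex.normSq_mk]; ring_nf

lemma znorm_nonneg (k : ℤ × ℤ) : 0 ≤ znorm k := Real.sqrt_nonneg _

lemma znorm_add_le (j k : ℤ × ℤ) : znorm (j + k) ≤ znorm j + znorm k := by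
  simp only [znorm_eq_norm]
  have h : (⟨(j + k).1, (j + k).2⟩ : ℂ) = ⟨j.1, j.2⟩ + ⟨k.1, k.2⟩ := by
    apply Complex.ext <;> simp
  exact h ▸ norm_add_le _ _

lemma max_abs_le_znorm (k : ℤ × ℤ) : max |(k.1 : ℝ)| |(k.2 : ℝ)| ≤ znorm k := by
  rw [znorm_eq_norm]
  exact max_le (Complex.abs_re_le_norm ⟨k.1, k.2⟩) (Complex.abs_im_le_norm ⟨k.1, k.2⟩)

lemma one_le_znorm {k : ℤ × ℤ} (hk : k ≠ 0) : 1 ≤ znorm k := by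
  refine le_trans ?_ (max_abs_le_znorm k)
  obtain h | h : k.1 ≠ 0 ∨ k.2 ≠ 0 := by
    by_contra! h; exact hk (Prod.ext h.1 h.2)
  · exact le_max_of_le_left (mod_cast Int.one_le_abs h)
  · exact le_max_of_le_right (mod_cast Int.one_le_abs h)

/-- `j^⊥ · k` is the imaginary part of `conj j * k` when `j, k` are viewed in `ℂ`. -/
lemma abs_perpDot_le (j k : ℤ × ℤ) : |perpDot j k| ≤ znorm j * znorm k := by
  have h : perpDot j k = (starRingEnd ℂ ⟨j.1, j.2⟩ * ⟨k.1, k.2⟩).im := by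
    simp [perpDot, Complex.mul_im]; ring
  rw [h, znorm_eq_norm, znorm_eq_norm, ← Complex.norm_conj (⟨j.1, j.2⟩ : ℂ), ← norm_mul]
  exact Complex.abs_im_le_norm _

lemma abs_perpDot_div_znorm_le (j k : ℤ × ℤ) : |perpDot j k / znorm j| ≤ znorm k := by
  rw [abs_div, abs_of_nonneg (znorm_nonneg j)]
  rcases (znorm_nonneg j).eq_or_lt with h | h
  · simp [← h, znorm_nonneg]
  · rw [div_le_iff₀ h, mul_comm]
    exact abs_perpDot_le j k

lemma exp_mul_sub_le_one {s c : ℝ} (hs0 : 0 ≤ s) (hs1 : s ≤ 1) (hc : 0 ≤ c) (j k : ℤ × ℤ) :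
    Real.exp (c * (znorm (j + k) ^ s - znorm j ^ s - znorm k ^ s)) ≤ 1 := by
  have hsub : znorm (j + k) ^ s ≤ znorm j ^ s + znorm k ^ s :=
    (Real.rpow_le_rpow (znorm_nonneg _) (znorm_add_le j k) hs0).trans
      (Real.rpow_add_le_add_rpow (znorm_nonneg _) (znorm_nonneg _) hs0 hs1)
  exact Real.exp_le_one_iff.2 (mul_nonpos_of_nonneg_of_nonpos hc (by linarith))

def eznorm (k : ℤ × ℤ) : ℝ≥0∞ := ENNReal.ofReal (znorm k)

lemma one_le_eznorm {k : ℤ × ℤ} (hk : k ≠ 0) : 1 ≤ eznorm k :=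
  ENNReal.one_le_ofReal.2 (one_le_znorm hk)

lemma eznorm_add_le (j k : ℤ × ℤ) : eznorm (j + k) ≤ eznorm j + eznorm k := by
  rw [eznorm, eznorm, eznorm, ← ENNReal.ofReal_add (znorm_nonneg _) (znorm_nonneg _)]
  exact ENNReal.ofReal_le_ofReal (znorm_add_le j k)

def latticeZeta (r : ℝ) : ℝ≥0∞ := ∑' k : ℤ × ℤ, if k = 0 then 0 else eznorm k ^ (-r)

/-- Compare with the sup-norm lattice sum, which converges for `r > 2` by the Eisenstein series
estimates. -/
lemma latticeZeta_lt_top {r : ℝ} (hr : 2 < r) : latticeZeta r < ⊤ := by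
  let e := (finTwoArrowEquiv ℤ).symm
  have hsum : Summable fun k : ℤ × ℤ => ‖e k‖ ^ (-r) :=
    e.summable_iff.2 (EisensteinSeries.summable_one_div_norm_rpow hr)
  have hle (k : ℤ × ℤ) :
      (if k = 0 then 0 else eznorm k ^ (-r)) ≤ ENNReal.ofReal (‖e k‖ ^ (-r)) := by
    split_ifs with hk
    · exact zero_le
    have hnorm : ‖e k‖ ≤ znorm k := by
      convert max_abs_le_znorm k using 1
      simp [e, EisensteinSeries.norm_eq_max_natAbs, Nat.cast_natAbs]
    have hpos : 0 < ‖e k‖ :=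
      norm_pos_iff.2 fun h => hk (by simpa [e] using congrArg e.symm h : k = (0, 0))
    rw [eznorm, ENNReal.ofReal_rpow_of_pos (hpos.trans_le hnorm)]
    exact ENNReal.ofReal_le_ofReal (Real.rpow_le_rpow_of_nonpos hpos hnorm (by linarith))
  calc latticeZeta r ≤ ∑' k, ENNReal.ofReal (‖e k‖ ^ (-r)) := ENNReal.tsum_le_tsum hle
    _ = ENNReal.ofReal (∑' k, ‖e k‖ ^ (-r)) :=
      (ENNReal.ofReal_tsum_of_nonneg (fun _ => by positivity) hsum).symm
    _ < ⊤ := ENNReal.ofReal_lt_top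

def weightedAbs (ρ : ℝ) (f : ℤ × ℤ → ℂ) (k : ℤ × ℤ) : ℝ≥0∞ := eznorm k ^ ρ * ‖f k‖ₑ

lemma gnorm_zero_eq_l2Norm (s ρ : ℝ) {f : ℤ × ℤ → ℂ} (hf : f 0 = 0) :
    gnorm s ρ 0 f = l2Norm (weightedAbs ρ f) := by
  rw [gnorm, l2Norm]
  congr 1
  refine tsum_congr fun k => ?_
  split_ifs with hk
  · simp [weightedAbs, hk, hf]
  · have hpos : 0 < znorm k := one_pos.trans_le (one_le_znorm hk)
    rw [weightedAbs, eznorm, ENNReal.mul_rpow_of_nonneg _ _ zero_le_two, ← ENNReal.rpow_mul,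
      ENNReal.ofReal_rpow_of_pos hpos, ← ofReal_norm, ENNReal.ofReal_rpow_of_nonneg (norm_nonneg _)
      zero_le_two, ← ENNReal.ofReal_mul (by positivity)]
    norm_num [mul_comm ρ 2]

lemma tsum_weightedAbs_le {f : ℤ × ℤ → ℂ} (hf : f 0 = 0) (ρ a : ℝ) :
    ∑' k, weightedAbs (ρ - a) f k ≤
      latticeZeta (2 * a) ^ (1 / 2 : ℝ) * l2Norm (weightedAbs ρ f) := by
  have hsplit (k : ℤ × ℤ) :
      weightedAbs (ρ - a) f k = (if k = 0 then 0 else eznorm k ^ (-a)) * weightedAbs ρ f k := by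
    split_ifs with hk
    · simp [weightedAbs, hk, hf]
    · rw [weightedAbs, weightedAbs, ← mul_assoc, ← ENNReal.rpow_add _ _
        (one_pos.trans_le (one_le_eznorm hk)).ne' ENNReal.ofReal_ne_top, neg_add_eq_sub]
  have hzeta : l2Norm (fun k : ℤ × ℤ => if k = 0 then 0 else eznorm k ^ (-a)) =
      latticeZeta (2 * a) ^ (1 / 2 : ℝ) := by
    rw [l2Norm, latticeZeta]
    congr 1
    refine tsum_congr fun k => ?_
    split_ifs
    · simp
    · rw [← ENNReal.rpow_mul, neg_mul, mul_comm]
  simp_rw [hsplit, ← hzeta]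
  exact tsum_mul_le_l2Norm_mul_l2Norm _ _

def trilinearSummand (s σ c : ℝ) (f : ℤ × ℤ → ℂ) (p : (ℤ × ℤ) × (ℤ × ℤ)) : ℂ :=
  if p.1 = 0 ∨ p.2 = 0 ∨ p.1 + p.2 = 0 then 0 else
    ((Real.exp (c * (znorm (p.1 + p.2) ^ s - znorm p.1 ^ s - znorm p.2 ^ s)) : ℝ) : ℂ)
      * ((perpDot p.1 p.2 / znorm p.1 : ℝ) : ℂ) * f p.1 * f p.2
      * ((znorm (p.1 + p.2) ^ (2 * σ * s) : ℝ) : ℂ)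
      * (starRingEnd ℂ) (f (p.1 + p.2))

lemma enorm_trilinearSummand_le {s c : ℝ} (σ : ℝ) (hs0 : 0 ≤ s) (hs1 : s ≤ 1) (hc : 0 ≤ c)
    (f : ℤ × ℤ → ℂ) (j k : ℤ × ℤ) :
    ‖trilinearSummand s σ c f (j, k)‖ₑ ≤
      eznorm k * eznorm (j + k) ^ (2 * σ * s) * ‖f j‖ₑ * ‖f k‖ₑ * ‖f (j + k)‖ₑ := by
  unfold trilinearSummand
  split_ifs with h
  · simp
  have hexp := exp_mul_sub_le_one hs0 hs1 hc j k
  have hweight : ‖((znorm (j + k) ^ (2 * σ * s) : ℝ) : ℂ)‖ₑ = eznorm (j + k) ^ (2 * σ * s) := by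
    have hpos : 0 < znorm (j + k) := one_pos.trans_le (one_le_znorm (by tauto))
    rw [← ofReal_norm, Complex.norm_real, Real.norm_of_nonneg (by positivity), eznorm,
      ENNReal.ofReal_rpow_of_pos hpos]
  simp only [enorm_mul, hweight, RCLike.enorm_conj]
  calc ‖((Real.exp (c * (znorm (j + k) ^ s - znorm j ^ s - znorm k ^ s)) : ℝ) : ℂ)‖ₑ
        * ‖((perpDot j k / znorm j : ℝ) : ℂ)‖ₑ * ‖f j‖ₑ * ‖f k‖ₑ
        * eznorm (j + k) ^ (2 * σ * s) * ‖f (j + k)‖ₑ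
      ≤ 1 * eznorm k * ‖f j‖ₑ * ‖f k‖ₑ * eznorm (j + k) ^ (2 * σ * s) * ‖f (j + k)‖ₑ := by
        gcongr
        · rw [← ofReal_norm, Complex.norm_real, Real.norm_of_nonneg (Real.exp_pos _).le]
          exact ENNReal.ofReal_le_one.2 hexp
        · rw [← ofReal_norm, Complex.norm_real, Real.norm_eq_abs, eznorm]
          exact ENNReal.ofReal_le_ofReal (abs_perpDot_div_znorm_le j k)
    _ = _ := by ring

/-- Frequency splitting: `|j + k|^t ≤ |j|^t + |k|^t` moves the excess weight `|j + k|^t`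
onto the lower-order factor at `j` or at `k`. -/
lemma ENNReal.mul_rpow_add_le_of_le_add {x y z : ℝ≥0∞} {t u v : ℝ} (ht0 : 0 ≤ t) (ht1 : t ≤ 1)
    (hu : 1 ≤ u) (hv : 1 + t ≤ v) (hy : 1 ≤ y) (hz : z ≤ x + y) :
    y * z ^ (v + t) ≤ (x ^ t * y ^ u + y ^ v) * z ^ v := by
  calc y * z ^ (v + t) = z ^ t * y * z ^ v := by
        rw [ENNReal.rpow_add_of_nonneg v t (by linarith) ht0]; ring
    _ ≤ (x ^ t + y ^ t) * y * z ^ v := by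
        gcongr
        exact (ENNReal.rpow_le_rpow hz ht0).trans (ENNReal.rpow_add_le_add_rpow x y ht0 ht1)
    _ = (x ^ t * y ^ (1 : ℝ) + y ^ (t + 1)) * z ^ v := by
        rw [ENNReal.rpow_add_of_nonneg t 1 ht0 zero_le_one, ENNReal.rpow_one]; ring
    _ ≤ (x ^ t * y ^ u + y ^ v) * z ^ v := by
        gcongr
        linarith

lemma enorm_trilinearSummand_le_add {s σ c : ℝ} (hs : s ∈ Set.Icc (1 / 2) 1) (hσs : 1 ≤ σ * s)
    (hσ : σ ≤ 2) (hc : 0 ≤ c) (f : ℤ × ℤ → ℂ) (j k : ℤ × ℤ) :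
    ‖trilinearSummand s σ c f (j, k)‖ₑ ≤
      weightedAbs ((σ - 1) * s) f j * weightedAbs (σ * s) f k
          * weightedAbs ((σ + 1) * s) f (j + k)
        + weightedAbs 0 f j * weightedAbs ((σ + 1) * s) f k
          * weightedAbs ((σ + 1) * s) f (j + k) := by
  obtain ⟨hs12, hs1⟩ := hs
  by_cases hk : k = 0
  · simp [trilinearSummand, hk]
  have hσ1 : 1 ≤ σ := by nlinarith
  have hsplit := ENNReal.mul_rpow_add_le_of_le_add (t := (σ - 1) * s) (u := σ * s)
    (v := (σ + 1) * s) (by nlinarith) (by nlinarith) hσs (by nlinarith) (one_le_eznorm hk)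
    (eznorm_add_le j k)
  calc ‖trilinearSummand s σ c f (j, k)‖ₑ
      ≤ eznorm k * eznorm (j + k) ^ ((σ + 1) * s + (σ - 1) * s) * ‖f j‖ₑ * ‖f k‖ₑ
          * ‖f (j + k)‖ₑ := by
        rw [show (σ + 1) * s + (σ - 1) * s = 2 * σ * s by ring]
        exact enorm_trilinearSummand_le σ (by linarith) hs1 hc f j k
    _ ≤ (eznorm j ^ ((σ - 1) * s) * eznorm k ^ (σ * s) + eznorm k ^ ((σ + 1) * s))
          * eznorm (j + k) ^ ((σ + 1) * s) * ‖f j‖ₑ * ‖f k‖ₑ * ‖f (j + k)‖ₑ := by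
        gcongr
    _ = _ := by simp only [weightedAbs, ENNReal.rpow_zero]; ring

lemma tsum_enorm_trilinearSummand_le {s σ c : ℝ} (hs : s ∈ Set.Icc (1 / 2) 1)
    (hσs : 1 ≤ σ * s) (hσ : σ ≤ 2) (hc : 0 ≤ c) {f : ℤ × ℤ → ℂ} (hf : f 0 = 0) :
    ∑' p, ‖trilinearSummand s σ c f p‖ₑ ≤
      (latticeZeta (4 * s) ^ (1 / 2 : ℝ) + latticeZeta (2 * (σ * s)) ^ (1 / 2 : ℝ))
        * l2Norm (weightedAbs (σ * s) f) * l2Norm (weightedAbs ((σ + 1) * s) f) ^ 2 := by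
  set X := l2Norm (weightedAbs (σ * s) f)
  set Y := l2Norm (weightedAbs ((σ + 1) * s) f)
  have hlow : ∑' j, weightedAbs ((σ - 1) * s) f j ≤ latticeZeta (4 * s) ^ (1 / 2 : ℝ) * Y := by
    convert tsum_weightedAbs_le hf ((σ + 1) * s) (2 * s) using 4 <;> ring
  have hzero : ∑' j, weightedAbs 0 f j ≤ latticeZeta (2 * (σ * s)) ^ (1 / 2 : ℝ) * X := by
    simpa only [sub_self] using tsum_weightedAbs_le hf (σ * s) (σ * s)
  calc ∑' p, ‖trilinearSummand s σ c f p‖ₑ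
      ≤ ∑' p : (ℤ × ℤ) × (ℤ × ℤ),
          (weightedAbs ((σ - 1) * s) f p.1 * weightedAbs (σ * s) f p.2
              * weightedAbs ((σ + 1) * s) f (p.1 + p.2)
            + weightedAbs 0 f p.1 * weightedAbs ((σ + 1) * s) f p.2
              * weightedAbs ((σ + 1) * s) f (p.1 + p.2)) :=
        ENNReal.tsum_le_tsum fun p => enorm_trilinearSummand_le_add hs hσs hσ hc f p.1 p.2
    _ ≤ (∑' j, weightedAbs ((σ - 1) * s) f j) * (X * Y) + (∑' j, weightedAbs 0 f j) * (Y * Y) := by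
        rw [ENNReal.tsum_add]
        exact add_le_add (tsum_mul_mul_add_le _ _ _) (tsum_mul_mul_add_le _ _ _)
    _ ≤ latticeZeta (4 * s) ^ (1 / 2 : ℝ) * Y * (X * Y)
          + latticeZeta (2 * (σ * s)) ^ (1 / 2 : ℝ) * X * (Y * Y) := by
        gcongr
    _ = _ := by ring

/-- **Weighted trilinear estimate.**
For `s ∈ (1/2,1]`, `σ ∈ (1/s,2)` there is `C > 0` (depending only on `s, σ`) such that for
every `c ≥ 0` and `f : ℤ² → ℂ` with `f(0) = 0` and `X_{σ+1} < ∞`,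
`|∑_{j,k≠0, j+k≠0} e^{c(|j+k|^s−|j|^s−|k|^s)} ((j^⊥·k)/|j|) f(j) f(k) |j+k|^{2σs} conj (f(j+k))|
  ≤ C X_σ X_{σ+1}²`, where `X_ρ = (∑_{k≠0} |k|^{2ρs} |f(k)|²)^{1/2} = ‖f‖_{ρs,0}`. -/
theorem weighted_trilinear_estimate
    (s σ : ℝ) (hs : s ∈ Set.Ioc (1/2 : ℝ) 1) (hσ : σ ∈ Set.Ioo (1/s) 2) :
    ∃ C : ℝ, 0 < C ∧
      ∀ (c : ℝ), 0 ≤ c →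
      ∀ f : ℤ × ℤ → ℂ, f 0 = 0 → gnorm s ((σ + 1) * s) 0 f < ⊤ →
        (‖∑' p : (ℤ × ℤ) × (ℤ × ℤ),
            if p.1 = 0 ∨ p.2 = 0 ∨ p.1 + p.2 = 0 then 0 else
              ((Real.exp (c * (znorm (p.1 + p.2) ^ s - znorm p.1 ^ s - znorm p.2 ^ s)) : ℝ) : ℂ)
                * ((perpDot p.1 p.2 / znorm p.1 : ℝ) : ℂ) * f p.1 * f p.2
                * ((znorm (p.1 + p.2) ^ (2 * σ * s) : ℝ) : ℂ)
                * (starRingEnd ℂ) (f (p.1 + p.2))‖₊ : ℝ≥0∞) ≤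
          ENNReal.ofReal C * gnorm s (σ * s) 0 f * (gnorm s ((σ + 1) * s) 0 f) ^ 2 := by
  obtain ⟨hs12, hs1⟩ := hs
  have hσs : 1 < σ * s := by rw [← div_lt_iff₀ (by linarith)]; exact hσ.1
  set K := latticeZeta (4 * s) ^ (1 / 2 : ℝ) + latticeZeta (2 * (σ * s)) ^ (1 / 2 : ℝ)
  have hK : K ≠ ⊤ := ENNReal.add_ne_top.2
    ⟨ENNReal.rpow_ne_top_of_nonneg (by norm_num) (latticeZeta_lt_top (by linarith)).ne,
      ENNReal.rpow_ne_top_of_nonneg (by norm_num) (latticeZeta_lt_top (by linarith)).ne⟩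
  refine ⟨K.toReal + 1, by positivity, fun c hc f hf _ => ?_⟩
  rw [gnorm_zero_eq_l2Norm _ _ hf, gnorm_zero_eq_l2Norm _ _ hf]
  calc ‖∑' p, trilinearSummand s σ c f p‖ₑ ≤ ∑' p, ‖trilinearSummand s σ c f p‖ₑ :=
        enorm_tsum_le_tsum_enorm
    _ ≤ K * l2Norm (weightedAbs (σ * s) f) * l2Norm (weightedAbs ((σ + 1) * s) f) ^ 2 :=
        tsum_enorm_trilinearSummand_le ⟨hs12.le, hs1⟩ hσs.le hσ.2.le hc hf
    _ ≤ _ := by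
        gcongr
        exact (ENNReal.le_ofReal_iff_toReal_le hK (by positivity)).2 (by linarith)

end
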